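/- arXiv:1912.04725 — 2 statements merged into one kernel-verified Lean document; each statement's English description precedes it below -/
import Mathlib

section
/- For every i < j in [n] and σ ∈ S_n: the right cyclic shift R_{[i,j]} (the cycle i→i+1→⋯→j→i) satisfies R_{[i,j]} ≤ σ in Bruhat order if and only if max σ^{-1}([i]) ≥ j; and its inverse L_{[i,j]} ≤ σ if and only if max σ([i]) ≥ j. -/
/-!
Write `rank π a b = #{x ≤ a | π x ≤ b}`, so that `τ ≤ σ` means `rank σ ≤ rank τ` pointwise. Since
the cyclic shift `R = R_{[i,j]}` moves every point up by at most one, its rank is the largest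
possible, `min a b + 1`, except on the triangle `i ≤ b ≤ a < j`, where it is `b`. Hence `R ≤ σ`
says that for each `(a, b)` in the triangle some `x > a` has `σ x ≤ b`. The corner
`(a, b) = (j - 1, i)` gives the strongest of these conditions: some `x ≥ j` has `σ x ≤ i`, that is,
`max σ⁻¹([i]) ≥ j`. The statement for `L = R⁻¹` follows because inversion preserves the order.
-/

namespace SmoothPerm

variable {n : ℕ}

/-- Bruhat order on `S_n`, via the standard counting criterion. -/
def bruhatLE (τ σ : Equiv.Perm (Fin n)) : Prop :=
  ∀ i j : Fin n,
    (Finset.univ.filter (fun x => x ≤ i ∧ σ x ≤ j)).card ≤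
      (Finset.univ.filter (fun x => x ≤ i ∧ τ x ≤ j)).card

/-- Number of inversions (the length ℓ(σ)). -/
def invNum (σ : Equiv.Perm (Fin n)) : ℕ :=
  (Finset.univ.filter (fun p : Fin n × Fin n => p.1 < p.2 ∧ σ p.2 < σ p.1)).card

def isTransposition (τ : Equiv.Perm (Fin n)) : Prop :=
  ∃ i j : Fin n, i < j ∧ τ = Equiv.swap i j

/-- σ is smooth iff ℓ(σ) equals the number of transpositions Bruhat-below σ. -/
def smooth (σ : Equiv.Perm (Fin n)) : Prop :=
  invNum σ = Nat.card {τ : Equiv.Perm (Fin n) // isTransposition τ ∧ bruhatLE τ σ}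

def avoids4231 (σ : Equiv.Perm (Fin n)) : Prop :=
  ¬ ∃ a b c d : Fin n, a < b ∧ b < c ∧ c < d ∧ σ d < σ b ∧ σ b < σ c ∧ σ c < σ a

/-- covexillary = 3412-avoiding. -/
def covexillary (σ : Equiv.Perm (Fin n)) : Prop :=
  ¬ ∃ a b c d : Fin n, a < b ∧ b < c ∧ c < d ∧ σ c < σ d ∧ σ d < σ a ∧ σ a < σ b

def avoids321 (σ : Equiv.Perm (Fin n)) : Prop :=
  ¬ ∃ a b c : Fin n, a < b ∧ b < c ∧ σ c < σ b ∧ σ b < σ a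

/-- The 3-cycle i ↦ j ↦ k ↦ i. -/
def Rc (i j k : Fin n) : Equiv.Perm (Fin n) := Equiv.swap i k * Equiv.swap i j

def Lc (i j k : Fin n) : Equiv.Perm (Fin n) := (Rc i j k)⁻¹

def inC23 (τ : Equiv.Perm (Fin n)) : Prop :=
  isTransposition τ ∨ ∃ i j k : Fin n, i < j ∧ j < k ∧ (τ = Rc i j k ∨ τ = Lc i j k)

/-- The 2-3-table of σ. -/
def Ctab (σ : Equiv.Perm (Fin n)) : Set (Equiv.Perm (Fin n)) :=
  {τ | inC23 τ ∧ bruhatLE τ σ}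

def admissible (A : Set (Equiv.Perm (Fin n))) : Prop :=
  (∀ τ ∈ A, inC23 τ) ∧
  (∀ σ ∈ A, ∀ τ : Equiv.Perm (Fin n), inC23 τ → bruhatLE τ σ → τ ∈ A) ∧
  (∀ i j k l : Fin n, i < j → j < l → i < k → k < l →
    Rc i j l ∈ A → Lc i k l ∈ A → Equiv.swap i l ∈ A) ∧
  (∀ i j k : Fin n, i < j → j < k →
    Equiv.swap i j ∈ A → Equiv.swap j k ∈ A → (Rc i j k ∈ A ∨ Lc i j k ∈ A))

def isWedge (A : Set (Equiv.Perm (Fin n))) (i j : Fin n) : Prop :=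
  i < j ∧ Equiv.swap i j ∈ A ∧
  (∀ i' : Fin n, (i' : ℕ) + 1 = (i : ℕ) → Equiv.swap i' i ∉ A) ∧
  (∀ j' : Fin n, (j : ℕ) + 1 = (j' : ℕ) → Rc i j j' ∉ A)

def derivedSet (A : Set (Equiv.Perm (Fin n))) (i j : Fin n) : Set (Equiv.Perm (Fin n)) :=
  A \ ({Equiv.swap i j} ∪ {τ | ∃ k, j < k ∧ τ = Lc i j k} ∪
       {τ | ∃ k, i < k ∧ k < j ∧ τ = Rc i k j})

def strictTotalOn (S : Set (Equiv.Perm (Fin n)))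
    (r : Equiv.Perm (Fin n) → Equiv.Perm (Fin n) → Prop) : Prop :=
  (∀ x ∈ S, ¬ r x x) ∧
  (∀ x ∈ S, ∀ y ∈ S, ∀ z ∈ S, r x y → r y z → r x z) ∧
  (∀ x ∈ S, ∀ y ∈ S, x ≠ y → r x y ∨ r y x)

def compatibleOrder (A : Set (Equiv.Perm (Fin n)))
    (r : Equiv.Perm (Fin n) → Equiv.Perm (Fin n) → Prop) : Prop :=
  (∀ i j k : Fin n, i < j → j < k → Rc i j k ∈ A → Lc i j k ∉ A →
    r (Equiv.swap i j) (Equiv.swap j k)) ∧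
  (∀ i j k : Fin n, i < j → j < k → Lc i j k ∈ A → Rc i j k ∉ A →
    r (Equiv.swap j k) (Equiv.swap i j)) ∧
  (∀ i j k : Fin n, i < j → j < k → Equiv.swap i k ∈ A →
    ((r (Equiv.swap i j) (Equiv.swap i k) ∧ r (Equiv.swap i k) (Equiv.swap j k)) ∨
     (r (Equiv.swap j k) (Equiv.swap i k) ∧ r (Equiv.swap i k) (Equiv.swap i j))))

def coversIn (S : Set (Equiv.Perm (Fin n)))
    (r : Equiv.Perm (Fin n) → Equiv.Perm (Fin n) → Prop)
    (x y : Equiv.Perm (Fin n)) : Prop :=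
  x ∈ S ∧ y ∈ S ∧ r x y ∧ ∀ z ∈ S, ¬ (r x z ∧ r z y)

/-- m_σ(i) = max σ([i]). -/
def maxS (σ : Equiv.Perm (Fin n)) (i : Fin n) : Fin n :=
  ((Finset.univ.filter (fun x => x ≤ i)).image (fun x => σ x)).max'
    ⟨σ i, Finset.mem_image_of_mem _ (by simp)⟩

/-- The cyclic shift i → i+1 → ⋯ → j → i. -/
def Rseg (i j : Fin n) : Equiv.Perm (Fin n) :=
  ((List.finRange n).filter (fun x => decide (i ≤ x ∧ x ≤ j))).formPerm

def definedByInclusions (σ : Equiv.Perm (Fin n)) : Prop :=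
  ∀ τ : Equiv.Perm (Fin n),
    (∀ x, maxS τ x ≤ maxS σ x) → (∀ x, maxS τ⁻¹ x ≤ maxS σ⁻¹ x) → bruhatLE τ σ

open Finset Equiv

/-- The rank of the upper-left `(a+1) × (b+1)` corner of the permutation matrix of `π`. -/
def rank (π : Perm (Fin n)) (a b : Fin n) : ℕ := #{x | x ≤ a ∧ π x ≤ b}

theorem bruhatLE_iff_rank_le {τ σ : Perm (Fin n)} :
    bruhatLE τ σ ↔ ∀ a b, rank σ a b ≤ rank τ a b := Iff.rfl

theorem rank_inv (π : Perm (Fin n)) (a b : Fin n) : rank π⁻¹ b a = rank π a b :=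
  card_nbij' (⇑π⁻¹) (⇑π) (fun y hy => by simp_all) (fun x hx => by simp_all)
    (fun y _ => by simp) (fun x _ => by simp)

theorem rank_le_left (π : Perm (Fin n)) (a b : Fin n) : rank π a b ≤ a + 1 :=
  (card_le_card fun _ hx => mem_Iic.2 (mem_filter.1 hx).2.1).trans (Fin.card_Iic a).le

theorem rank_le_right (π : Perm (Fin n)) (a b : Fin n) : rank π a b ≤ b + 1 :=
  rank_inv π a b ▸ rank_le_left π⁻¹ b a

theorem rank_le_iff_exists (π : Perm (Fin n)) (a b : Fin n) :
    rank π a b ≤ b ↔ ∃ x, a < x ∧ π x ≤ b := by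
  have hrank : rank π a b = #{y ∈ Iic b | π⁻¹ y ≤ a} := by
    rw [← rank_inv, rank]
    congr 1
    ext y
    simp
  have hfull := card_filter_eq_iff (s := Iic b) (p := fun y => π⁻¹ y ≤ a)
  have hle := card_filter_le (Iic b) (fun y => π⁻¹ y ≤ a)
  rw [Fin.card_Iic] at hfull hle
  have key : rank π a b ≤ b ↔ ¬ ∀ y ∈ Iic b, π⁻¹ y ≤ a := by
    rw [hrank, ← hfull]
    omega
  rw [key]
  push Not
  constructor
  · rintro ⟨y, hyb, hya⟩
    exact ⟨π⁻¹ y, hya, by simpa using hyb⟩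
  · rintro ⟨x, hax, hxb⟩
    exact ⟨π x, mem_Iic.2 hxb, by simpa using hax⟩

def segList (i j : Fin n) : List (Fin n) :=
  (List.finRange n).filter fun x => decide (i ≤ x ∧ x ≤ j)

theorem Rseg_eq_formPerm (i j : Fin n) : Rseg i j = (segList i j).formPerm := rfl

theorem map_val_segList (i j : Fin n) : (segList i j).map Fin.val = List.Ico i (j + 1) := by
  have hp : (fun x : Fin n => decide (i ≤ x ∧ x ≤ j)) =
      (fun k : ℕ => decide (i ≤ k) && decide (k < j + 1)) ∘ Fin.val := by
    funext x
    rw [Function.comp_apply, ← Bool.decide_and]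
    exact decide_eq_decide.2 (by omega)
  rw [segList, hp, ← List.filter_map, List.map_coe_finRange_eq_range, ← List.Ico.zero_bot,
    ← List.filter_filter, List.Ico.filter_lt, List.Ico.filter_le]
  congr 1; omega

theorem val_Rseg_apply {i j : Fin n} (hij : i ≤ j) (x : Fin n) :
    (Rseg i j x : ℕ) = if i ≤ x ∧ x < j then (x : ℕ) + 1 else if x = j then (i : ℕ) else x := by
  by_cases hx : i ≤ x ∧ x ≤ j
  · have hlen : (segList i j).length = j + 1 - i := by
      simpa using congrArg List.length (map_val_segList i j)
    have hget (k : ℕ) (hk : k < (segList i j).length) : ((segList i j)[k] : ℕ) = i + k := by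
      have := List.getElem_of_eq (map_val_segList i j) (i := k) (by simpa using hk)
      simpa [List.Ico] using this
    have hk : (x : ℕ) - i < (segList i j).length := by omega
    have hxk : (segList i j)[(x : ℕ) - i] = x := Fin.ext (by rw [hget]; omega)
    have hform := List.formPerm_apply_getElem (segList i j) ((List.nodup_finRange n).filter _) _ hk
    rw [hxk, ← Rseg_eq_formPerm] at hform
    rw [hform, hget]
    split_ifs with h1 h2
    · rw [Nat.mod_eq_of_lt (by omega)]; omega
    · rw [hlen, show (x : ℕ) - i + 1 = j + 1 - i by omega, Nat.mod_self]; omega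
    · omega
  · rw [if_neg (by omega), if_neg (by omega), Rseg_eq_formPerm,
      List.formPerm_apply_of_notMem (by simpa [segList] using hx)]

theorem rank_Rseg {i j : Fin n} (hij : i ≤ j) (a b : Fin n) :
    rank (Rseg i j) a b = if i ≤ b ∧ b ≤ a ∧ a < j then (b : ℕ) else min (a : ℕ) b + 1 := by
  have hsucc (x : Fin n) : (Rseg i j x : ℕ) ≤ x + 1 := by
    rw [val_Rseg_apply hij]
    split_ifs <;> omega
  split_ifs with h
  · refine le_antisymm ((rank_le_iff_exists _ a b).2 ⟨j, h.2.2, ?_⟩) ?_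
    · rw [Fin.le_def, val_Rseg_apply hij]
      simp [h.1]
    · calc (b : ℕ) = #(Iio b) := (Fin.card_Iio b).symm
        _ ≤ rank (Rseg i j) a b := card_le_card fun x hx => by
          simp only [mem_Iio, mem_filter, mem_univ, true_and] at hx ⊢
          have := hsucc x
          omega
  · have hleft := rank_le_left (Rseg i j) a b
    have hright := rank_le_right (Rseg i j) a b
    refine le_antisymm (by omega) ?_
    rcases lt_or_ge a b with hab | hba
    · calc min (a : ℕ) b + 1 = #(Iic a) := by rw [Fin.card_Iic]; omega
        _ ≤ rank (Rseg i j) a b := card_le_card fun x hx => by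
          simp only [mem_Iic, mem_filter, mem_univ, true_and] at hx ⊢
          have := hsucc x
          omega
    · by_contra! hlt
      obtain ⟨x, hax, hxb⟩ := (rank_le_iff_exists (Rseg i j) a b).1 (by omega)
      rw [Fin.le_def, val_Rseg_apply hij] at hxb
      split_ifs at hxb <;> omega

theorem bruhatLE_Rseg_iff {i j : Fin n} (hij : i < j) (σ : Perm (Fin n)) :
    bruhatLE (Rseg i j) σ ↔ ∃ x, j ≤ x ∧ σ x ≤ i := by
  rw [bruhatLE_iff_rank_le]
  constructor
  · intro h
    obtain ⟨a, ha⟩ : ∃ a : Fin n, (a : ℕ) + 1 = j := ⟨⟨j - 1, by omega⟩, by simp; omega⟩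
    have hcorner := h a i
    rw [rank_Rseg hij.le, if_pos (by omega)] at hcorner
    obtain ⟨x, hax, hx⟩ := (rank_le_iff_exists σ a i).1 hcorner
    exact ⟨x, by omega, hx⟩
  · rintro ⟨x₀, hjx₀, hx₀⟩ a b
    rw [rank_Rseg hij.le]
    split_ifs with h
    · exact (rank_le_iff_exists σ a b).2 ⟨x₀, by omega, hx₀.trans h.1⟩
    · have := rank_le_left σ a b
      have := rank_le_right σ a b
      omega

theorem bruhatLE_inv_inv_iff {τ σ : Perm (Fin n)} : bruhatLE τ⁻¹ σ⁻¹ ↔ bruhatLE τ σ := by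
  simp only [bruhatLE_iff_rank_le, rank_inv]
  exact forall_comm

theorem le_maxS_iff (σ : Perm (Fin n)) (i j : Fin n) : j ≤ maxS σ i ↔ ∃ x ≤ i, j ≤ σ x := by
  constructor
  · intro h
    have hmem : maxS σ i ∈ (univ.filter (· ≤ i)).image σ := max'_mem _ _
    obtain ⟨x, hx, hxeq⟩ := mem_image.1 hmem
    exact ⟨x, (mem_filter.1 hx).2, hxeq ▸ h⟩
  · rintro ⟨x, hxi, hjx⟩
    exact hjx.trans (le_max' _ _ (mem_image_of_mem σ (by simpa using hxi)))

theorem cyclic_shift_le_iff (n : ℕ) (i j : Fin n) (hij : i < j)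
    (σ : Equiv.Perm (Fin n)) :
    (bruhatLE (Rseg i j) σ ↔ j ≤ maxS σ⁻¹ i) ∧
    (bruhatLE (Rseg i j)⁻¹ σ ↔ j ≤ maxS σ i) := by
  have hR (π : Perm (Fin n)) : bruhatLE (Rseg i j) π ↔ j ≤ maxS π⁻¹ i := by
    rw [bruhatLE_Rseg_iff hij, le_maxS_iff]
    exact ⟨fun ⟨x, hjx, hx⟩ => ⟨π x, hx, by simpa⟩, fun ⟨y, hy, hjy⟩ => ⟨π⁻¹ y, hjy, by simpa⟩⟩
  refine ⟨hR σ, ?_⟩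
  rw [← bruhatLE_inv_inv_iff, inv_inv, hR, inv_inv]

end SmoothPerm
end

section
/- A permutation σ ∈ S_n is defined by inclusions if and only if it satisfies: for every τ ≤ σ and indices i < j < k < l with τ(l) < τ(j) < τ(k) < τ(i), we have τ T_{j,k} ≤ σ. -/
namespace SmoothPerm

variable {n : ℕ}

open Finset Equiv

theorem Equiv.Perm.apply_inv_self {α : Type*} (f : Equiv.Perm α) (x : α) : f (f⁻¹ x) = x :=
  f.apply_symm_apply x

theorem Equiv.Perm.inv_apply_self {α : Type*} (f : Equiv.Perm α) (x : α) : f⁻¹ (f x) = x :=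
  f.symm_apply_apply x

/-! ### Basic lemmas about `maxS` -/

lemma le_maxS (π : Equiv.Perm (Fin n)) {x i : Fin n} (h : x ≤ i) : π x ≤ maxS π i :=
  Finset.le_max' _ _ (Finset.mem_image_of_mem _ (by simp [h]))

lemma maxS_le {π : Equiv.Perm (Fin n)} {i m : Fin n} (h : ∀ x, x ≤ i → π x ≤ m) :
    maxS π i ≤ m := by
  apply Finset.max'_le
  intro y hy
  obtain ⟨x, hx, rfl⟩ := Finset.mem_image.1 hy
  exact h x (by simpa using hx)

lemma exists_maxS (π : Equiv.Perm (Fin n)) (i : Fin n) : ∃ x, x ≤ i ∧ π x = maxS π i := by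
  have := Finset.max'_mem _ (⟨π i, Finset.mem_image_of_mem _ (by simp)⟩ :
    ((Finset.univ.filter (fun x => x ≤ i)).image (fun x => π x)).Nonempty)
  obtain ⟨x, hx, hx2⟩ := Finset.mem_image.1 this
  exact ⟨x, by simpa using hx, hx2⟩

lemma maxS_mono (π : Equiv.Perm (Fin n)) {i i' : Fin n} (h : i ≤ i') :
    maxS π i ≤ maxS π i' :=
  maxS_le (fun x hx => le_maxS π (hx.trans h))

/-! ### Basic lemmas about `bruhatLE` -/

lemma bruhatLE_refl (σ : Equiv.Perm (Fin n)) : bruhatLE σ σ := fun _ _ => le_rfl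

lemma bruhatLE_trans {ρ τ σ : Equiv.Perm (Fin n)} (h1 : bruhatLE ρ τ) (h2 : bruhatLE τ σ) :
    bruhatLE ρ σ := fun i j => (h2 i j).trans (h1 i j)

lemma cnt_inv (π : Equiv.Perm (Fin n)) (i j : Fin n) :
    (Finset.univ.filter (fun x => x ≤ i ∧ π x ≤ j)).card =
      (Finset.univ.filter (fun w => w ≤ j ∧ π⁻¹ w ≤ i)).card := by
  apply Finset.card_bij (fun x _ => π x)
  · intro x hx
    simp only [Finset.mem_filter, Finset.mem_univ, true_and] at hx ⊢
    exact ⟨hx.2, by simp [hx.1]⟩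
  · intro x _ y _ h; exact π.injective h
  · intro w hw
    simp only [Finset.mem_filter, Finset.mem_univ, true_and] at hw
    exact ⟨π⁻¹ w, by simp [Finset.mem_filter, hw.1]; exact hw.2, by simp⟩

lemma bruhatLE_inv {τ σ : Equiv.Perm (Fin n)} (h : bruhatLE τ σ) : bruhatLE τ⁻¹ σ⁻¹ := by
  intro i j
  have e1 := cnt_inv σ⁻¹ i j
  have e2 := cnt_inv τ⁻¹ i j
  simp only [inv_inv] at e1 e2
  rw [e1, e2]
  exact h j i

lemma card_filter_le_eq (π : Equiv.Perm (Fin n)) (v : Fin n) :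
    (Finset.univ.filter (fun x => π x ≤ v)).card = (v : ℕ) + 1 := by
  rw [← Fin.card_Iic v]
  apply Finset.card_bij (fun x _ => π x)
  · intro x hx; simp only [Finset.mem_filter] at hx; simpa using hx.2
  · intro x _ y _ h; exact π.injective h
  · intro w hw; exact ⟨π⁻¹ w, by simp [Finset.mem_filter, by simpa using hw], by simp⟩

lemma card_filter_lt_eq (π : Equiv.Perm (Fin n)) (v : Fin n) :
    (Finset.univ.filter (fun x => π x < v)).card = (v : ℕ) := by
  rw [← Fin.card_Iio v]
  apply Finset.card_bij (fun x _ => π x)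
  · intro x hx; simp only [Finset.mem_filter] at hx; simpa using hx.2
  · intro x _ y _ h; exact π.injective h
  · intro w hw; exact ⟨π⁻¹ w, by simp [Finset.mem_filter, by simpa using hw], by simp⟩

lemma card_filter_ioc_eq (π : Equiv.Perm (Fin n)) (v z : Fin n) :
    (Finset.univ.filter (fun x => v < π x ∧ π x ≤ z)).card = (z : ℕ) - (v : ℕ) := by
  rw [← Fin.card_Ioc v z]
  apply Finset.card_bij (fun x _ => π x)
  · intro x hx; simp only [Finset.mem_filter] at hx
    simp [Finset.mem_Ioc, hx.2.1, hx.2.2]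
  · intro x _ y _ h; exact π.injective h
  · intro w hw
    simp only [Finset.mem_Ioc] at hw
    exact ⟨π⁻¹ w, by simp [Finset.mem_filter, hw.1, hw.2], by simp⟩

/-- If all values `≤ v` of `π` occur at positions `≤ r`, the count is `v+1`. -/
lemma cnt_full (π : Equiv.Perm (Fin n)) {r v : Fin n} (h : ∀ w, w ≤ v → π⁻¹ w ≤ r) :
    (Finset.univ.filter (fun x => x ≤ r ∧ π x ≤ v)).card = (v : ℕ) + 1 := by
  rw [← card_filter_le_eq π v]
  congr 1
  apply Finset.filter_congr
  intro x _
  simp only [and_iff_right_iff_imp]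
  intro hx
  have := h (π x) hx
  simpa using this

/-- Bruhat comparability implies inclusion of max functions. -/
lemma maxS_le_of_bruhatLE {τ σ : Equiv.Perm (Fin n)} (h : bruhatLE τ σ) (i : Fin n) :
    maxS τ i ≤ maxS σ i := by
  set m := maxS σ i with hm
  have hfull : (Finset.univ.filter (fun x => x ≤ i ∧ σ x ≤ m)).card = (i : ℕ) + 1 := by
    rw [← Fin.card_Iic i]
    congr 1
    ext x
    simp only [Finset.mem_filter, Finset.mem_univ, true_and, Finset.mem_Iic,
      and_iff_left_iff_imp]
    exact fun hx => le_maxS σ hx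
  have hle := h i m
  rw [hfull] at hle
  have hsub : (Finset.univ.filter (fun x => x ≤ i ∧ τ x ≤ m)) ⊆ Finset.Iic i := by
    intro x hx
    simp only [Finset.mem_filter] at hx
    simpa using hx.2.1
  have hcard : (Finset.Iic i).card ≤ (Finset.univ.filter (fun x => x ≤ i ∧ τ x ≤ m)).card := by
    rw [Fin.card_Iic]; exact hle
  have heq := Finset.eq_of_subset_of_card_le hsub hcard
  apply maxS_le
  intro x hx
  have : x ∈ Finset.Iic i := by simpa using hx
  rw [← heq] at this
  simp only [Finset.mem_filter] at this
  exact this.2.2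

/-! ### Swap lemmas -/

lemma swap_eval {τ : Equiv.Perm (Fin n)} {a b : Fin n} :
    (τ * Equiv.swap a b) a = τ b ∧ (τ * Equiv.swap a b) b = τ a ∧
      ∀ x, x ≠ a → x ≠ b → (τ * Equiv.swap a b) x = τ x := by
  refine ⟨?_, ?_, fun x hxa hxb => ?_⟩
  · show τ (Equiv.swap a b a) = τ b; rw [Equiv.swap_apply_left]
  · show τ (Equiv.swap a b b) = τ a; rw [Equiv.swap_apply_right]
  · show τ (Equiv.swap a b x) = τ x; rw [Equiv.swap_apply_of_ne_of_ne hxa hxb]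

/-- Multiplying by a swap in decreasing position order goes down in Bruhat order. -/
lemma bruhatLE_swap_down (π : Equiv.Perm (Fin n)) {a b : Fin n} (hab : a < b)
    (hv : π b < π a) : bruhatLE (π * Equiv.swap a b) π := by
  intro i j
  set ρ := π * Equiv.swap a b with hρ
  rcases le_or_gt b i with hbi | hib
  · -- b ≤ i : inject via swap
    apply Finset.card_le_card_of_injOn (fun x => Equiv.swap a b x)
    · intro x hx
      simp only [Finset.coe_filter, Set.mem_setOf_eq, Finset.mem_univ, true_and] at hx ⊢
      constructor
      · rcases eq_or_ne x a with hxa | hxa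
        · rw [hxa, Equiv.swap_apply_left]; exact hbi
        rcases eq_or_ne x b with hxb | hxb
        · rw [hxb, Equiv.swap_apply_right]; exact (hab.le.trans hbi)
        · rw [Equiv.swap_apply_of_ne_of_ne hxa hxb]; exact hx.1
      · show π (Equiv.swap a b (Equiv.swap a b x)) ≤ j
        rw [Equiv.swap_apply_self]; exact hx.2
    · exact (Equiv.swap a b).injective.injOn
  · -- i < b : subset
    apply Finset.card_le_card
    intro x hx
    simp only [Finset.mem_filter, Finset.mem_univ, true_and] at hx ⊢
    refine ⟨hx.1, ?_⟩
    rcases eq_or_ne x a with hxa | hxa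
    · rw [hxa] at hx ⊢
      have : ρ a = π b := swap_eval.1
      rw [this]; exact (hv.le.trans hx.2)
    rcases eq_or_ne x b with rfl | hxb
    · exact absurd hx.1 (not_le.2 hib)
    · rw [swap_eval.2.2 x hxa hxb]; exact hx.2

/-- Climbing by a swap in increasing order: the original is below. -/
lemma bruhatLE_swap_up (τ : Equiv.Perm (Fin n)) {a b : Fin n} (hab : a < b)
    (hv : τ a < τ b) : bruhatLE τ (τ * Equiv.swap a b) := by
  have key := bruhatLE_swap_down (τ * Equiv.swap a b) hab (by
    rw [swap_eval.1, swap_eval.2.1]; exact hv)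
  have : τ * Equiv.swap a b * Equiv.swap a b = τ := by
    rw [mul_assoc, Equiv.swap_mul_self, mul_one]
  rwa [this] at key

/-! ### Measure -/

def meas (τ : Equiv.Perm (Fin n)) : ℕ := ∑ x : Fin n, (x : ℕ) * (τ x : ℕ)

lemma meas_swap_lt {τ : Equiv.Perm (Fin n)} {a b : Fin n} (hab : a < b)
    (hv : τ a < τ b) : meas (τ * Equiv.swap a b) < meas τ := by
  classical
  unfold meas
  set f : Fin n → ℕ := fun x => (x : ℕ) * (τ x : ℕ) with hf
  set g : Fin n → ℕ := fun x => (x : ℕ) * (((τ * Equiv.swap a b) x : Fin n) : ℕ) with hg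
  have hne : a ≠ b := ne_of_lt hab
  have hbmem : b ∈ Finset.univ.erase a := Finset.mem_erase.2 ⟨hne.symm, Finset.mem_univ b⟩
  have splitf : ∑ x : Fin n, f x = f a + (f b + ∑ x ∈ (Finset.univ.erase a).erase b, f x) := by
    rw [Finset.add_sum_erase _ f hbmem, Finset.add_sum_erase _ f (Finset.mem_univ a)]
  have splitg : ∑ x : Fin n, g x = g a + (g b + ∑ x ∈ (Finset.univ.erase a).erase b, g x) := by
    rw [Finset.add_sum_erase _ g hbmem, Finset.add_sum_erase _ g (Finset.mem_univ a)]
  have hcong : ∑ x ∈ (Finset.univ.erase a).erase b, g x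
      = ∑ x ∈ (Finset.univ.erase a).erase b, f x := by
    apply Finset.sum_congr rfl
    intro x hx
    simp only [Finset.mem_erase] at hx
    simp only [hg, hf, swap_eval.2.2 x hx.2.1 hx.1]
  show ∑ x : Fin n, g x < ∑ x : Fin n, f x
  rw [splitf, splitg, hcong]
  have ega : g a = (a : ℕ) * (τ b : ℕ) := by rw [hg]; simp [swap_eval.1]
  have egb : g b = (b : ℕ) * (τ a : ℕ) := by rw [hg]; simp [swap_eval.2.1]
  have hab' : (a : ℕ) < (b : ℕ) := hab
  have hv' : ((τ a : Fin n) : ℕ) < ((τ b : Fin n) : ℕ) := hv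
  have : g a + g b < f a + f b := by
    rw [ega, egb, hf]
    nlinarith
  omega

/-! ### The raising move stays inside the hull -/

lemma raise_maxS {σ τ : Equiv.Perm (Fin n)} {a b : Fin n}
    (hab : a < b) (hv : τ a < τ b) (h1 : τ b ≤ maxS σ a) (h2 : b ≤ maxS σ⁻¹ (τ a))
    (hM : ∀ x, maxS τ x ≤ maxS σ x) (hN : ∀ x, maxS τ⁻¹ x ≤ maxS σ⁻¹ x) :
    (∀ x, maxS (τ * Equiv.swap a b) x ≤ maxS σ x) ∧
      (∀ x, maxS (τ * Equiv.swap a b)⁻¹ x ≤ maxS σ⁻¹ x) := by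
  constructor
  · intro p
    apply maxS_le
    intro x hxp
    rcases eq_or_ne x a with rfl | hxa
    · rw [swap_eval.1]
      exact h1.trans (maxS_mono σ hxp)
    rcases eq_or_ne x b with rfl | hxb
    · rw [swap_eval.2.1]
      calc τ a ≤ maxS τ p := le_maxS τ ((le_of_lt hab).trans hxp)
        _ ≤ maxS σ p := hM p
    · rw [swap_eval.2.2 x hxa hxb]
      exact (le_maxS τ hxp).trans (hM p)
  · intro q
    apply maxS_le
    intro w hwq
    have hinv : (τ * Equiv.swap a b)⁻¹ w = Equiv.swap a b (τ⁻¹ w) := by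
      rw [mul_inv_rev, Equiv.swap_inv]; rfl
    rcases eq_or_ne (τ⁻¹ w) a with ha | hxa
    · have hw : w = τ a := by rw [← ha]; simp
      rw [hinv, ha, Equiv.swap_apply_left]
      exact h2.trans (maxS_mono σ⁻¹ (hw ▸ hwq))
    rcases eq_or_ne (τ⁻¹ w) b with hb | hxb
    · have hw : w = τ b := by rw [← hb]; simp
      rw [hinv, hb, Equiv.swap_apply_right]
      have hta : τ a ≤ q := le_of_lt (lt_of_lt_of_le (hw ▸ hv) hwq)
      exact (le_of_lt hab).trans (h2.trans (maxS_mono σ⁻¹ hta))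
    · rw [hinv, Equiv.swap_apply_of_ne_of_ne hxa hxb]
      exact (le_maxS τ⁻¹ hwq).trans (hN q)

/-! ### The property of Statement 14 -/

def prop14 (σ : Equiv.Perm (Fin n)) : Prop :=
  ∀ τ : Equiv.Perm (Fin n), bruhatLE τ σ →
    ∀ i j k l : Fin n, i < j → j < k → k < l →
      τ l < τ j → τ j < τ k → τ k < τ i →
      bruhatLE (τ * Equiv.swap j k) σ

lemma not_bruhatLE_of_point {ρ σ : Equiv.Perm (Fin n)} (i0 j0 : Fin n)
    (himp : ∀ x, x ≤ i0 → ρ x ≤ j0 → σ x ≤ j0) (h1 : σ i0 ≤ j0) (h2 : ¬ ρ i0 ≤ j0) :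
    ¬ bruhatLE ρ σ := by
  intro h
  have hss : (Finset.univ.filter (fun x => x ≤ i0 ∧ ρ x ≤ j0)) ⊂
      (Finset.univ.filter (fun x => x ≤ i0 ∧ σ x ≤ j0)) := by
    constructor
    · intro x hx
      simp only [Finset.mem_filter, Finset.mem_univ, true_and] at hx ⊢
      exact ⟨hx.1, himp x hx.1 hx.2⟩
    · intro hsub
      have : i0 ∈ Finset.univ.filter (fun x => x ≤ i0 ∧ σ x ≤ j0) := by
        simp [Finset.mem_filter, h1]
      have := hsub this
      simp only [Finset.mem_filter, Finset.mem_univ, true_and] at this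
      exact h2 this.2
  exact absurd (h i0 j0) (not_le.2 (Finset.card_lt_card hss))

lemma prop14_no4231 {σ : Equiv.Perm (Fin n)} (hP : prop14 σ) :
    ¬ ∃ a b c d : Fin n, a < b ∧ b < c ∧ c < d ∧ σ d < σ b ∧ σ b < σ c ∧ σ c < σ a := by
  rintro ⟨a, b, c, d, hab, hbc, hcd, h1, h2, h3⟩
  have hρ := hP σ (bruhatLE_refl σ) a b c d hab hbc hcd h1 h2 h3
  refine not_bruhatLE_of_point b (σ b) ?_ le_rfl ?_ hρ
  · intro x hx hxle
    rcases eq_or_ne x b with rfl | hxb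
    · exact le_rfl
    · rwa [swap_eval.2.2 x hxb (ne_of_lt (lt_of_le_of_lt hx hbc))] at hxle
  · rw [swap_eval.1]; exact not_le.2 h2

lemma prop14_no35142 {σ : Equiv.Perm (Fin n)} (hP : prop14 σ) :
    ¬ ∃ a b c d e : Fin n, a < b ∧ b < c ∧ c < d ∧ d < e ∧
      σ c < σ e ∧ σ e < σ a ∧ σ a < σ d ∧ σ d < σ b := by
  rintro ⟨a, b, c, d, e, hab, hbc, hcd, hde, h1, h2, h3, h4⟩
  set τ := σ * Equiv.swap a c with hτ
  have hac : a < c := hab.trans hbc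
  have hτa : τ a = σ c := swap_eval.1
  have hτc : τ c = σ a := swap_eval.2.1
  have hτo : ∀ x, x ≠ a → x ≠ c → τ x = σ x := swap_eval.2.2
  have hτσ : bruhatLE τ σ := bruhatLE_swap_down σ hac (h1.trans h2)
  have hτb : τ b = σ b := hτo b (ne_of_gt hab) (ne_of_lt hbc)
  have hτd : τ d = σ d := hτo d (ne_of_gt (hac.trans hcd)) (ne_of_gt hcd)
  have hτe : τ e = σ e := hτo e (ne_of_gt (hac.trans (hcd.trans hde))) (ne_of_gt (hcd.trans hde))
  have hρ := hP τ hτσ b c d e hbc hcd hde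
    (by rw [hτe, hτc]; exact h2) (by rw [hτc, hτd]; exact h3) (by rw [hτd, hτb]; exact h4)
  refine not_bruhatLE_of_point c (σ a) ?_ (le_of_lt (h1.trans h2)) ?_ hρ
  · intro x hx hxle
    rcases eq_or_ne x c with hxc | hxc
    · rw [hxc]; exact le_of_lt (h1.trans h2)
    rcases eq_or_ne x a with hxa | hxa
    · rw [hxa]
    · rw [swap_eval.2.2 x hxc (ne_of_lt (lt_of_le_of_lt hx hcd)), hτo x hxa hxc] at hxle
      exact hxle
  · rw [show (τ * Equiv.swap c d) c = τ d from swap_eval.1, hτd]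
    exact not_le.2 h3

lemma prop14_no42513 {σ : Equiv.Perm (Fin n)} (hP : prop14 σ) :
    ¬ ∃ a b c d e : Fin n, a < b ∧ b < c ∧ c < d ∧ d < e ∧
      σ d < σ b ∧ σ b < σ e ∧ σ e < σ a ∧ σ a < σ c := by
  rintro ⟨a, b, c, d, e, hab, hbc, hcd, hde, h1, h2, h3, h4⟩
  set τ := σ * Equiv.swap c e with hτ
  have hce : c < e := hcd.trans hde
  have hτc : τ c = σ e := swap_eval.1
  have hτe : τ e = σ c := swap_eval.2.1
  have hτo : ∀ x, x ≠ c → x ≠ e → τ x = σ x := swap_eval.2.2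
  have hτσ : bruhatLE τ σ := bruhatLE_swap_down σ hce (h3.trans h4)
  have hτa : τ a = σ a := hτo a (ne_of_lt (hab.trans hbc)) (ne_of_lt ((hab.trans hbc).trans hce))
  have hτb : τ b = σ b := hτo b (ne_of_lt hbc) (ne_of_lt (hbc.trans hce))
  have hτd : τ d = σ d := hτo d (ne_of_gt hcd) (ne_of_lt hde)
  have hρ := hP τ hτσ a b c d hab hbc hcd
    (by rw [hτd, hτb]; exact h1) (by rw [hτb, hτc]; exact h2) (by rw [hτc, hτa]; exact h3)
  refine not_bruhatLE_of_point b (σ b) ?_ le_rfl ?_ hρ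
  · intro x hx hxle
    rcases eq_or_ne x b with hxb | hxb
    · rw [hxb]
    · have hxc : x ≠ c := ne_of_lt (lt_of_le_of_lt hx hbc)
      rw [swap_eval.2.2 x hxb hxc,
        hτo x hxc (ne_of_lt (lt_of_le_of_lt hx (hbc.trans hce)))] at hxle
      exact hxle
  · rw [show (τ * Equiv.swap b c) b = τ c from swap_eval.1, hτc]
    exact not_le.2 h2

lemma prop14_no351624 {σ : Equiv.Perm (Fin n)} (hP : prop14 σ) :
    ¬ ∃ a b c d e f : Fin n, a < b ∧ b < c ∧ c < d ∧ d < e ∧ e < f ∧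
      σ c < σ e ∧ σ e < σ a ∧ σ a < σ f ∧ σ f < σ b ∧ σ b < σ d := by
  rintro ⟨a, b, c, d, e, f, hab, hbc, hcd, hde, hef, h1, h2, h3, h4, h5⟩
  set τ1 := σ * Equiv.swap a c with hτ1
  set τ := τ1 * Equiv.swap d f with hτ
  have hac : a < c := hab.trans hbc
  have hdf : d < f := hde.trans hef
  have hτ1a : τ1 a = σ c := swap_eval.1
  have hτ1c : τ1 c = σ a := swap_eval.2.1
  have hτ1o : ∀ x, x ≠ a → x ≠ c → τ1 x = σ x := swap_eval.2.2
  have hτd : τ d = σ f := by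
    rw [show τ d = τ1 f from swap_eval.1]
    exact hτ1o f (ne_of_gt (hac.trans (hcd.trans hdf))) (ne_of_gt (hcd.trans hdf))
  have hτf : τ f = σ d := by
    rw [show τ f = τ1 d from swap_eval.2.1]
    exact hτ1o d (ne_of_gt (hac.trans hcd)) (ne_of_gt hcd)
  have hτo : ∀ x, x ≠ a → x ≠ c → x ≠ d → x ≠ f → τ x = σ x := by
    intro x hxa hxc hxd hxf
    rw [show τ x = τ1 x from swap_eval.2.2 x hxd hxf, hτ1o x hxa hxc]
  have hτa : τ a = σ c := by
    rw [show τ a = τ1 a from swap_eval.2.2 a (ne_of_lt (hac.trans hcd))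
      (ne_of_lt (hac.trans (hcd.trans hdf))), hτ1a]
  have hτc : τ c = σ a := by
    rw [show τ c = τ1 c from swap_eval.2.2 c (ne_of_lt hcd) (ne_of_lt (hcd.trans hdf)), hτ1c]
  have hτb : τ b = σ b := hτo b (ne_of_gt hab) (ne_of_lt hbc) (ne_of_lt (hbc.trans hcd))
    (ne_of_lt ((hbc.trans hcd).trans hdf))
  have hτe : τ e = σ e := hτo e (ne_of_gt (hac.trans (hcd.trans hde)))
    (ne_of_gt (hcd.trans hde)) (ne_of_gt hde) (ne_of_lt hef)
  have hτ1σ : bruhatLE τ1 σ := bruhatLE_swap_down σ hac (h1.trans h2)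
  have hττ1 : bruhatLE τ τ1 := by
    apply bruhatLE_swap_down τ1 hdf
    rw [hτ1o f (ne_of_gt (hac.trans (hcd.trans hdf))) (ne_of_gt (hcd.trans hdf)),
      hτ1o d (ne_of_gt (hac.trans hcd)) (ne_of_gt hcd)]
    exact h4.trans h5
  have hτσ : bruhatLE τ σ := bruhatLE_trans hττ1 hτ1σ
  have hρ := hP τ hτσ b c d e hbc hcd hde
    (by rw [hτe, hτc]; exact h2) (by rw [hτc, hτd]; exact h3) (by rw [hτd, hτb]; exact h4)
  refine not_bruhatLE_of_point c (σ a) ?_ (le_of_lt (h1.trans h2)) ?_ hρ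
  · intro x hx hxle
    rcases eq_or_ne x c with hxc | hxc
    · rw [hxc]; exact le_of_lt (h1.trans h2)
    rcases eq_or_ne x a with hxa | hxa
    · rw [hxa]
    · have hxd : x ≠ d := ne_of_lt (lt_of_le_of_lt hx hcd)
      rw [swap_eval.2.2 x hxc hxd,
        hτo x hxa hxc hxd (ne_of_lt (lt_of_le_of_lt hx (hcd.trans hdf)))] at hxle
      exact hxle
  · rw [show (τ * Equiv.swap c d) c = τ d from swap_eval.1, hτd]
    exact not_le.2 h3

/-! ### First difference goes down -/

lemma firstdiff_lt {σ τ : Equiv.Perm (Fin n)}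
    (h4231 : ¬ ∃ a b c d : Fin n, a < b ∧ b < c ∧ c < d ∧ σ d < σ b ∧ σ b < σ c ∧ σ c < σ a)
    (h42513 : ¬ ∃ a b c d e : Fin n, a < b ∧ b < c ∧ c < d ∧ d < e ∧
      σ d < σ b ∧ σ b < σ e ∧ σ e < σ a ∧ σ a < σ c)
    (hM : ∀ x, maxS τ x ≤ maxS σ x) (hN : ∀ x, maxS τ⁻¹ x ≤ maxS σ⁻¹ x)
    {a : Fin n} (hpre : ∀ x, x < a → τ x = σ x) (hne : τ a ≠ σ a) : τ a < σ a := by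
  by_contra hcon
  have hgt : σ a < τ a := lt_of_le_of_ne (not_lt.1 hcon) (Ne.symm hne)
  -- the position of the value τ a in σ is after a
  have hc : a < σ⁻¹ (τ a) := by
    rcases lt_trichotomy (σ⁻¹ (τ a)) a with h | h | h
    · have h2 := hpre _ h
      rw [Equiv.Perm.apply_inv_self] at h2
      exact absurd (τ.injective h2) (ne_of_lt h)
    · have h2 : τ a = σ a := by
        conv_lhs => rw [← Equiv.Perm.apply_inv_self σ (τ a), h]
      exact absurd h2 hne
    · exact h
  have h1 : τ a ≤ maxS σ a := (le_maxS τ le_rfl).trans (hM a)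
  obtain ⟨p0, hp0le, hp0⟩ := exists_maxS σ a
  have hp0v : τ a < σ p0 := by
    rcases lt_or_eq_of_le (h1.trans (le_of_eq hp0.symm)) with h | h
    · exact h
    · exfalso
      have hpc : p0 = σ⁻¹ (τ a) := by
        apply σ.injective
        rw [Equiv.Perm.apply_inv_self]
        exact h.symm
      rw [hpc] at hp0le
      exact absurd hc (not_lt.2 hp0le)
  have hp0a : p0 < a := by
    rcases lt_or_eq_of_le hp0le with h | h
    · exact h
    · exact absurd (h ▸ rfl : σ p0 = σ a) (ne_of_gt (hgt.trans hp0v))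
  set r := maxS σ⁻¹ (σ a) with hr
  have F1 : ∀ w, w ≤ σ a → σ⁻¹ w ≤ r := fun w hw => le_maxS σ⁻¹ hw
  have F3 : ∀ w, w ≤ σ a → τ⁻¹ w ≤ r := fun w hw => (le_maxS τ⁻¹ hw).trans (hN (σ a))
  have F2 : σ r ≤ σ a := by
    obtain ⟨w0, hw0, hw0e⟩ := exists_maxS σ⁻¹ (σ a)
    have hrw : σ r = w0 := by rw [hr, ← hw0e, Equiv.Perm.apply_inv_self]
    rw [hrw]; exact hw0
  have hp : a < τ⁻¹ (σ a) := by
    rcases lt_trichotomy (τ⁻¹ (σ a)) a with h | h | h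
    · have h2 := hpre _ h
      rw [Equiv.Perm.apply_inv_self] at h2
      exact absurd (σ.injective h2).symm (ne_of_lt h)
    · have h2 : τ a = σ a := by
        conv_lhs => rw [← h, Equiv.Perm.apply_inv_self]
      exact absurd h2 hne
    · exact h
  have hra : a < r := hp.trans_le (F3 (σ a) le_rfl)
  have hrv : σ r < σ a :=
    lt_of_le_of_ne F2 (fun h => absurd (σ.injective h) (ne_of_gt hra))
  have hcv : σ (σ⁻¹ (τ a)) = τ a := Equiv.Perm.apply_inv_self σ (τ a)
  rcases lt_trichotomy (σ⁻¹ (τ a)) r with hcr | hcr | hcr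
  · -- 4231 at (p0, a, c, r)
    exact h4231 ⟨p0, a, σ⁻¹ (τ a), r, hp0a, hc, hcr,
      hrv, by rw [hcv]; exact hgt, by rw [hcv]; exact hp0v⟩
  · have hre : σ r = τ a := by rw [← hcr, hcv]
    have : τ a < σ a := by rw [← hre]; exact hrv
    exact absurd this (not_lt.2 hgt.le)
  · -- r < c subcase
    by_cases hx1 : ∃ x, a < x ∧ x < r ∧ maxS σ a < σ x
    · obtain ⟨x, hax, hxr, hgtx⟩ := hx1
      exact h42513 ⟨p0, a, x, r, σ⁻¹ (τ a), hp0a, hax, hxr, hcr,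
        hrv, by rw [hcv]; exact hgt, by rw [hcv]; exact hp0v, by rw [hp0]; exact hgtx⟩
    · by_cases hx2 : ∃ x, a < x ∧ x < r ∧ σ a < σ x
      · obtain ⟨x, hax, hxr, hgtx⟩ := hx2
        have hxle : σ x ≤ maxS σ a := not_lt.1 (fun h => hx1 ⟨x, hax, hxr, h⟩)
        have hxlt : σ x < σ p0 := by
          rcases lt_or_eq_of_le (hp0.symm ▸ hxle) with h | h
          · exact h
          · exact absurd (σ.injective h) (ne_of_gt (hp0a.trans hax))
        exact h4231 ⟨p0, a, x, r, hp0a, hax, hxr, hrv, hgtx, hxlt⟩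
      · -- counting contradiction
        have hsmall : ∀ x, a < x → x ≤ r → σ x < σ a := by
          intro x hax hxr
          rcases lt_or_eq_of_le hxr with h | h
          · by_contra hcon2
            have : σ a < σ x := lt_of_le_of_ne (not_lt.1 hcon2)
              (fun he => absurd (σ.injective he) (ne_of_lt hax))
            exact hx2 ⟨x, hax, h, this⟩
          · rw [h]; exact hrv
        set K := Finset.univ.filter (fun x => x < a ∧ σ x < σ a) with hK
        have hS : (Finset.univ.filter (fun x => x ≤ r ∧ τ x ≤ σ a)).card = (σ a : ℕ) + 1 :=
          cnt_full τ F3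
        have hsub : Finset.univ.filter (fun x => x ≤ r ∧ τ x ≤ σ a) ⊆ K ∪ Finset.Ioc a r := by
          intro x hx
          simp only [Finset.mem_filter, Finset.mem_univ, true_and] at hx
          rcases lt_trichotomy x a with h | h | h
          · apply Finset.mem_union_left
            rw [hK]
            simp only [Finset.mem_filter, Finset.mem_univ, true_and]
            have hτx : σ x ≤ σ a := by rw [← hpre x h]; exact hx.2
            refine ⟨h, lt_of_le_of_ne hτx ?_⟩
            intro he
            exact absurd (σ.injective he) (ne_of_lt h)
          · exact absurd (h ▸ hx.2) (not_le.2 hgt)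
          · exact Finset.mem_union_right _ (Finset.mem_Ioc.2 ⟨h, hx.1⟩)
        have hdisj : Disjoint K (Finset.Ioc a r) := by
          rw [Finset.disjoint_left]
          intro x hxK hxI
          rw [hK] at hxK
          simp only [Finset.mem_filter, Finset.mem_univ, true_and] at hxK
          exact absurd (Finset.mem_Ioc.1 hxI).1 (not_lt.2 hxK.1.le)
        have hsub2 : K ∪ Finset.Ioc a r ⊆ Finset.univ.filter (fun x => σ x < σ a) := by
          intro x hx
          rcases Finset.mem_union.1 hx with h | h
          · rw [hK] at h
            simp only [Finset.mem_filter, Finset.mem_univ, true_and] at h ⊢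
            exact h.2
          · simp only [Finset.mem_filter, Finset.mem_univ, true_and]
            obtain ⟨h1', h2'⟩ := Finset.mem_Ioc.1 h
            exact hsmall x h1' h2'
        have hc1 : (σ a : ℕ) + 1 ≤ K.card + ((r : ℕ) - (a : ℕ)) := by
          calc (σ a : ℕ) + 1 = _ := hS.symm
            _ ≤ (K ∪ Finset.Ioc a r).card := Finset.card_le_card hsub
            _ ≤ K.card + (Finset.Ioc a r).card := Finset.card_union_le _ _
            _ = K.card + ((r : ℕ) - (a : ℕ)) := by rw [Fin.card_Ioc]
        have hc2 : K.card + ((r : ℕ) - (a : ℕ)) ≤ (σ a : ℕ) := by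
          calc K.card + ((r : ℕ) - (a : ℕ)) = (K ∪ Finset.Ioc a r).card := by
                rw [Finset.card_union_of_disjoint hdisj, Fin.card_Ioc]
            _ ≤ (Finset.univ.filter (fun x => σ x < σ a)).card := Finset.card_le_card hsub2
            _ = (σ a : ℕ) := card_filter_lt_eq σ (σ a)
        omega

/-! ### Existence of a raising transposition -/

lemma card_filter_le_pos (r : Fin n) :
    (Finset.univ.filter (fun x => x ≤ r)).card = (r : ℕ) + 1 := by
  rw [← Fin.card_Iic r]
  congr 1
  ext x
  simp

lemma cnt_split (π : Equiv.Perm (Fin n)) (r v : Fin n) :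
    (Finset.univ.filter (fun x => x ≤ r ∧ π x ≤ v)).card
      + (Finset.univ.filter (fun x => x ≤ r ∧ v < π x)).card = (r : ℕ) + 1 := by
  have h := Finset.card_filter_add_card_filter_not
    (s := Finset.univ.filter (fun x : Fin n => x ≤ r)) (p := fun x => π x ≤ v)
  rw [Finset.filter_filter, Finset.filter_filter, card_filter_le_pos] at h
  have e : (Finset.univ.filter fun x => x ≤ r ∧ ¬ π x ≤ v)
      = (Finset.univ.filter fun x => x ≤ r ∧ v < π x) := by
    ext x
    simp [not_le]
  rw [e] at h
  exact h

lemma exists_raise {σ τ : Equiv.Perm (Fin n)}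
    (h35142 : ¬ ∃ a b c d e : Fin n, a < b ∧ b < c ∧ c < d ∧ d < e ∧
      σ c < σ e ∧ σ e < σ a ∧ σ a < σ d ∧ σ d < σ b)
    (h351624 : ¬ ∃ a b c d e f : Fin n, a < b ∧ b < c ∧ c < d ∧ d < e ∧ e < f ∧
      σ c < σ e ∧ σ e < σ a ∧ σ a < σ f ∧ σ f < σ b ∧ σ b < σ d)
    (hM : ∀ x, maxS τ x ≤ maxS σ x) (hN : ∀ x, maxS τ⁻¹ x ≤ maxS σ⁻¹ x)
    {a : Fin n} (hpre : ∀ x, x < a → τ x = σ x) (hlt : τ a < σ a) :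
    ∃ b, a < b ∧ τ a < τ b ∧ τ b ≤ maxS σ a ∧ b ≤ maxS σ⁻¹ (τ a) := by
  by_contra hcon
  push_neg at hcon
  set r := maxS σ⁻¹ (τ a) with hrdef
  have hblock : ∀ x, a < x → x ≤ r → τ a < τ x → maxS σ a < τ x := by
    intro x h1 h2 h3
    by_contra h4
    exact absurd h2 (not_le.2 (hcon x h1 h3 (not_lt.1 h4)))
  have hc' : a < σ⁻¹ (τ a) := by
    rcases lt_trichotomy (σ⁻¹ (τ a)) a with h | h | h
    · have h2 := hpre _ h
      rw [Equiv.Perm.apply_inv_self] at h2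
      exact absurd (τ.injective h2) (ne_of_lt h)
    · have h2 : τ a = σ a := by
        conv_lhs => rw [← Equiv.Perm.apply_inv_self σ (τ a), h]
      exact absurd h2 (ne_of_lt hlt)
    · exact h
  have hra : a < r := hc'.trans_le (le_maxS σ⁻¹ le_rfl)
  have hσr : σ r ≤ τ a := by
    obtain ⟨w0, hw0, hw0e⟩ := exists_maxS σ⁻¹ (τ a)
    have hrw : σ r = w0 := by rw [hrdef, ← hw0e, Equiv.Perm.apply_inv_self]
    rw [hrw]; exact hw0
  have F1 : ∀ w, w ≤ τ a → σ⁻¹ w ≤ r := fun w hw => le_maxS σ⁻¹ hw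
  have F3 : ∀ w, w ≤ τ a → τ⁻¹ w ≤ r := fun w hw => (le_maxS τ⁻¹ hw).trans (hN (τ a))
  have hσa_le_Ma : σ a ≤ maxS σ a := le_maxS σ le_rfl
  -- counting to compare Wσ and Wτ
  set P := Finset.univ.filter (fun x => x < a ∧ τ a < σ x) with hPdef
  set Wσ := Finset.univ.filter (fun x => a < x ∧ x ≤ r ∧ τ a < σ x) with hWσdef
  set Wτ := Finset.univ.filter (fun x => a < x ∧ x ≤ r ∧ maxS σ a < τ x) with hWτdef
  have hSσ : (Finset.univ.filter (fun x => x ≤ r ∧ σ x ≤ τ a)).card = (τ a : ℕ) + 1 :=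
    cnt_full σ F1
  have hSτ : (Finset.univ.filter (fun x => x ≤ r ∧ τ x ≤ τ a)).card = (τ a : ℕ) + 1 :=
    cnt_full τ F3
  have hsplitσ := cnt_split σ r (τ a)
  have hsplitτ := cnt_split τ r (τ a)
  have hlow : P.card + Wσ.card + 1 ≤
      (Finset.univ.filter (fun x => x ≤ r ∧ τ a < σ x)).card := by
    have hd1 : Disjoint P Wσ := by
      rw [Finset.disjoint_left]
      intro x hx1 hx2
      rw [hPdef] at hx1; rw [hWσdef] at hx2
      simp only [Finset.mem_filter, Finset.mem_univ, true_and] at hx1 hx2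
      exact absurd hx2.1 (not_lt.2 hx1.1.le)
    have hd2 : Disjoint (P ∪ Wσ) {a} := by
      rw [Finset.disjoint_right]
      intro x hx1 hx2
      rw [Finset.mem_singleton] at hx1
      subst hx1
      rcases Finset.mem_union.1 hx2 with h | h
      · rw [hPdef] at h
        simp only [Finset.mem_filter, Finset.mem_univ, true_and] at h
        exact absurd h.1 (lt_irrefl _)
      · rw [hWσdef] at h
        simp only [Finset.mem_filter, Finset.mem_univ, true_and] at h
        exact absurd h.1 (lt_irrefl _)
    have hsub : (P ∪ Wσ) ∪ {a} ⊆ Finset.univ.filter (fun x => x ≤ r ∧ τ a < σ x) := by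
      intro x hx
      simp only [Finset.mem_filter, Finset.mem_univ, true_and]
      rcases Finset.mem_union.1 hx with hx | hx
      · rcases Finset.mem_union.1 hx with hx | hx
        · rw [hPdef] at hx
          simp only [Finset.mem_filter, Finset.mem_univ, true_and] at hx
          exact ⟨(hx.1.trans hra).le, hx.2⟩
        · rw [hWσdef] at hx
          simp only [Finset.mem_filter, Finset.mem_univ, true_and] at hx
          exact ⟨hx.2.1, hx.2.2⟩
      · rw [Finset.mem_singleton] at hx
        subst hx
        exact ⟨hra.le, hlt⟩
    calc P.card + Wσ.card + 1
        = ((P ∪ Wσ) ∪ {a}).card := by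
          rw [Finset.card_union_of_disjoint hd2, Finset.card_union_of_disjoint hd1,
            Finset.card_singleton]
      _ ≤ _ := Finset.card_le_card hsub
  have hup : (Finset.univ.filter (fun x => x ≤ r ∧ τ a < τ x)).card ≤ P.card + Wτ.card := by
    have hsub : Finset.univ.filter (fun x => x ≤ r ∧ τ a < τ x) ⊆ P ∪ Wτ := by
      intro x hx
      simp only [Finset.mem_filter, Finset.mem_univ, true_and] at hx
      rcases lt_trichotomy x a with h | h | h
      · apply Finset.mem_union_left
        rw [hPdef]
        simp only [Finset.mem_filter, Finset.mem_univ, true_and]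
        refine ⟨h, ?_⟩
        rw [← hpre x h]
        exact hx.2
      · exact absurd (h ▸ hx.2) (lt_irrefl _)
      · apply Finset.mem_union_right
        rw [hWτdef]
        simp only [Finset.mem_filter, Finset.mem_univ, true_and]
        exact ⟨h, hx.1, hblock x h hx.1 hx.2⟩
    exact (Finset.card_le_card hsub).trans (Finset.card_union_le _ _)
  have hkey : Wσ.card + 1 ≤ Wτ.card := by omega
  -- the big value z = max of σ on [0..r]
  obtain ⟨y, hy⟩ : Wτ.Nonempty := Finset.card_pos.1 (by omega)
  rw [hWτdef] at hy
  simp only [Finset.mem_filter, Finset.mem_univ, true_and] at hy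
  obtain ⟨z, hzr, hz⟩ := exists_maxS σ r
  have hMaz : maxS σ a < σ z := by
    rw [hz]
    exact lt_of_lt_of_le hy.2.2 ((le_maxS τ hy.2.1).trans (hM r))
  have haz : a < z := by
    by_contra h
    exact absurd (le_maxS σ (not_lt.1 h)) (not_le.2 hMaz)
  have hzr' : z < r := by
    apply lt_of_le_of_ne hzr
    intro he
    have : σ z = σ r := by rw [he]
    rw [this] at hMaz
    exact absurd (hσr.trans_lt (hlt.trans_le hσa_le_Ma)) (not_lt.2 hMaz.le)
  -- position of value (σ a) in τ is beyond r
  have hb0a : a < τ⁻¹ (σ a) := by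
    rcases lt_trichotomy (τ⁻¹ (σ a)) a with h | h | h
    · have h2 := hpre _ h
      rw [Equiv.Perm.apply_inv_self] at h2
      exact absurd (σ.injective h2).symm (ne_of_lt h)
    · have h2 : τ a = σ a := by
        conv_lhs => rw [← h, Equiv.Perm.apply_inv_self]
      exact absurd h2 (ne_of_lt hlt)
    · exact h
  have hb0r : r < τ⁻¹ (σ a) := by
    by_contra h
    have h2 := hblock (τ⁻¹ (σ a)) hb0a (not_lt.1 h)
      (by rw [Equiv.Perm.apply_inv_self]; exact hlt)
    rw [Equiv.Perm.apply_inv_self] at h2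
    exact absurd hσa_le_Ma (not_le.2 h2)
  set f := maxS σ⁻¹ (σ a) with hfdef
  have hrf : r < f := hb0r.trans_le ((le_maxS τ⁻¹ le_rfl).trans (hN (σ a)))
  have haf : a < f := hra.trans hrf
  have hσf_le : σ f ≤ σ a := by
    obtain ⟨w0, hw0, hw0e⟩ := exists_maxS σ⁻¹ (σ a)
    have hrw : σ f = w0 := by rw [hfdef, ← hw0e, Equiv.Perm.apply_inv_self]
    rw [hrw]; exact hw0
  have hσf : σ f < σ a :=
    lt_of_le_of_ne hσf_le (fun h => absurd (σ.injective h) (ne_of_gt haf))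
  have hτaσf : τ a < σ f := by
    by_contra h
    have h2 : σ⁻¹ (σ f) ≤ r := F1 (σ f) (not_lt.1 h)
    rw [Equiv.Perm.inv_apply_self] at h2
    exact absurd h2 (not_le.2 hrf)
  have hσr_lt_σf : σ r < σ f := lt_of_le_of_lt hσr hτaσf
  by_cases hg : ∃ g, r < g ∧ g < f ∧ σ a < σ g ∧ σ g < σ z
  · obtain ⟨g, hg1, hg2, hg3, hg4⟩ := hg
    exact h35142 ⟨a, z, r, g, f, haz, hzr', hg1, hg2, hσr_lt_σf, hσf, hg3, hg4⟩
  · push_neg at hg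
    -- (α) find h with r < h < f and σ z < σ h
    set P1 := Finset.univ.filter (fun x => x < a ∧ σ a < σ x) with hP1def
    have hA1 : (Finset.univ.filter (fun x => x ≤ f ∧ τ x ≤ σ a)).card = (σ a : ℕ) + 1 :=
      cnt_full τ (fun w hw => (le_maxS τ⁻¹ hw).trans (hN (σ a)))
    have hA2 : (Finset.univ.filter (fun x => x ≤ f ∧ σ x ≤ σ a)).card = (σ a : ℕ) + 1 :=
      cnt_full σ (fun w hw => le_maxS σ⁻¹ hw)
    have hsplitσf := cnt_split σ f (σ a)
    have hsplitτf := cnt_split τ f (σ a)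
    have hd1 : Disjoint P1 Wτ := by
      rw [Finset.disjoint_left]
      intro x hx1 hx2
      rw [hP1def] at hx1; rw [hWτdef] at hx2
      simp only [Finset.mem_filter, Finset.mem_univ, true_and] at hx1 hx2
      exact absurd hx2.1 (not_lt.2 hx1.1.le)
    have hlowf : P1.card + Wτ.card ≤
        (Finset.univ.filter (fun x => x ≤ f ∧ σ a < τ x)).card := by
      rw [← Finset.card_union_of_disjoint hd1]
      apply Finset.card_le_card
      intro x hx
      simp only [Finset.mem_filter, Finset.mem_univ, true_and]
      rcases Finset.mem_union.1 hx with hx | hx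
      · rw [hP1def] at hx
        simp only [Finset.mem_filter, Finset.mem_univ, true_and] at hx
        refine ⟨(hx.1.trans haf).le, ?_⟩
        rw [hpre x hx.1]
        exact hx.2
      · rw [hWτdef] at hx
        simp only [Finset.mem_filter, Finset.mem_univ, true_and] at hx
        exact ⟨hx.2.1.trans hrf.le, hσa_le_Ma.trans_lt hx.2.2⟩
    set H := Finset.univ.filter (fun x => r < x ∧ x ≤ f ∧ σ a < σ x) with hHdef
    have hupf : (Finset.univ.filter (fun x => x ≤ f ∧ σ a < σ x)).card ≤
        P1.card + Wσ.card + H.card := by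
      have hsub : Finset.univ.filter (fun x => x ≤ f ∧ σ a < σ x) ⊆ (P1 ∪ Wσ) ∪ H := by
        intro x hx
        simp only [Finset.mem_filter, Finset.mem_univ, true_and] at hx
        rcases lt_trichotomy x a with h | h | h
        · apply Finset.mem_union_left
          apply Finset.mem_union_left
          rw [hP1def]
          simp only [Finset.mem_filter, Finset.mem_univ, true_and]
          exact ⟨h, hx.2⟩
        · exact absurd (h ▸ hx.2) (lt_irrefl _)
        · rcases le_or_gt x r with h2 | h2
          · apply Finset.mem_union_left
            apply Finset.mem_union_right
            rw [hWσdef]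
            simp only [Finset.mem_filter, Finset.mem_univ, true_and]
            exact ⟨h, h2, hlt.trans hx.2⟩
          · apply Finset.mem_union_right
            rw [hHdef]
            simp only [Finset.mem_filter, Finset.mem_univ, true_and]
            exact ⟨h2, hx.1, hx.2⟩
      calc (Finset.univ.filter (fun x => x ≤ f ∧ σ a < σ x)).card
          ≤ ((P1 ∪ Wσ) ∪ H).card := Finset.card_le_card hsub
        _ ≤ (P1 ∪ Wσ).card + H.card := Finset.card_union_le _ _
        _ ≤ P1.card + Wσ.card + H.card := by
            have := Finset.card_union_le P1 Wσ
            omega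
    have hHpos : 1 ≤ H.card := by omega
    obtain ⟨h, hh⟩ : H.Nonempty := Finset.card_pos.1 (by omega)
    rw [hHdef] at hh
    simp only [Finset.mem_filter, Finset.mem_univ, true_and] at hh
    obtain ⟨hh1, hh2, hh3⟩ := hh
    have hhf : h < f := by
      apply lt_of_le_of_ne hh2
      intro he
      rw [he] at hh3
      exact absurd hh3 (not_lt.2 hσf.le)
    have hσzh : σ z < σ h := by
      apply lt_of_le_of_ne (hg h hh1 hhf hh3)
      intro he
      exact absurd (σ.injective he) (ne_of_lt (hzr'.trans hh1))
    -- (β) find x6 beyond f with σ a < σ x6 < σ z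
    set X := Finset.univ.filter (fun x => f < x ∧ σ a < σ x ∧ σ x ≤ σ z) with hXdef
    have hTσ : (Finset.univ.filter (fun x => σ a < σ x ∧ σ x ≤ σ z)).card
        = (σ z : ℕ) - (σ a : ℕ) := card_filter_ioc_eq σ (σ a) (σ z)
    have hTτ : (Finset.univ.filter (fun x => σ a < τ x ∧ τ x ≤ σ z)).card
        = (σ z : ℕ) - (σ a : ℕ) := card_filter_ioc_eq τ (σ a) (σ z)
    have hlowT : P1.card + Wτ.card ≤
        (Finset.univ.filter (fun x => σ a < τ x ∧ τ x ≤ σ z)).card := by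
      rw [← Finset.card_union_of_disjoint hd1]
      apply Finset.card_le_card
      intro x hx
      simp only [Finset.mem_filter, Finset.mem_univ, true_and]
      rcases Finset.mem_union.1 hx with hx | hx
      · rw [hP1def] at hx
        simp only [Finset.mem_filter, Finset.mem_univ, true_and] at hx
        rw [hpre x hx.1]
        exact ⟨hx.2, le_of_le_of_eq ((le_maxS σ hx.1.le).trans (maxS_mono σ hra.le)) hz.symm⟩
      · rw [hWτdef] at hx
        simp only [Finset.mem_filter, Finset.mem_univ, true_and] at hx
        exact ⟨hσa_le_Ma.trans_lt hx.2.2,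
          le_of_le_of_eq ((le_maxS τ hx.2.1).trans (hM r)) hz.symm⟩
    have hupT : (Finset.univ.filter (fun x => σ a < σ x ∧ σ x ≤ σ z)).card ≤
        P1.card + Wσ.card + X.card := by
      have hsub : Finset.univ.filter (fun x => σ a < σ x ∧ σ x ≤ σ z) ⊆ (P1 ∪ Wσ) ∪ X := by
        intro x hx
        simp only [Finset.mem_filter, Finset.mem_univ, true_and] at hx
        rcases lt_trichotomy x a with h' | h' | h'
        · apply Finset.mem_union_left
          apply Finset.mem_union_left
          rw [hP1def]
          simp only [Finset.mem_filter, Finset.mem_univ, true_and]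
          exact ⟨h', hx.1⟩
        · exact absurd (h' ▸ hx.1) (lt_irrefl _)
        · rcases le_or_gt x r with h2 | h2
          · apply Finset.mem_union_left
            apply Finset.mem_union_right
            rw [hWσdef]
            simp only [Finset.mem_filter, Finset.mem_univ, true_and]
            exact ⟨h', h2, hlt.trans hx.1⟩
          · rcases le_or_gt x f with h3 | h3
            · exfalso
              have hxf : x < f := by
                apply lt_of_le_of_ne h3
                intro he
                rw [he] at hx
                exact absurd hx.1 (not_lt.2 hσf.le)
              have hxz : σ x < σ z := by
                apply lt_of_le_of_ne hx.2
                intro he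
                exact absurd (σ.injective he) (ne_of_gt (hzr'.trans h2))
              exact absurd hxz (not_lt.2 (hg x h2 hxf hx.1))
            · apply Finset.mem_union_right
              rw [hXdef]
              simp only [Finset.mem_filter, Finset.mem_univ, true_and]
              exact ⟨h3, hx.1, hx.2⟩
      calc (Finset.univ.filter (fun x => σ a < σ x ∧ σ x ≤ σ z)).card
          ≤ ((P1 ∪ Wσ) ∪ X).card := Finset.card_le_card hsub
        _ ≤ (P1 ∪ Wσ).card + X.card := Finset.card_union_le _ _
        _ ≤ P1.card + Wσ.card + X.card := by
            have := Finset.card_union_le P1 Wσ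
            omega
    obtain ⟨x6, hx6⟩ : X.Nonempty := Finset.card_pos.1 (by omega)
    rw [hXdef] at hx6
    simp only [Finset.mem_filter, Finset.mem_univ, true_and] at hx6
    obtain ⟨hx61, hx62, hx63⟩ := hx6
    have hx6z : σ x6 < σ z := by
      apply lt_of_le_of_ne hx63
      intro he
      exact absurd (σ.injective he) (ne_of_gt ((hzr'.trans hrf).trans hx61))
    exact h351624 ⟨a, z, r, h, f, x6, haz, hzr', hh1, hhf, hx61,
      hσr_lt_σf, hσf, hx62, hx6z, hσzh⟩

theorem definedByInclusions_iff_property (n : ℕ) (σ : Equiv.Perm (Fin n)) :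
    definedByInclusions σ ↔
      ∀ τ : Equiv.Perm (Fin n), bruhatLE τ σ →
        ∀ i j k l : Fin n, i < j → j < k → k < l →
          τ l < τ j → τ j < τ k → τ k < τ i →
          bruhatLE (τ * Equiv.swap j k) σ := by
  constructor
  · intro hdef τ hτσ i j k l hij hjk hkl h1 h2 h3
    have hM : ∀ x, maxS τ x ≤ maxS σ x := maxS_le_of_bruhatLE hτσ
    have hN : ∀ x, maxS τ⁻¹ x ≤ maxS σ⁻¹ x := maxS_le_of_bruhatLE (bruhatLE_inv hτσ)
    have hb1 : τ k ≤ maxS σ j := (h3.le.trans (le_maxS τ hij.le)).trans (hM j)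
    have hb2 : k ≤ maxS σ⁻¹ (τ j) := by
      have hl : l ≤ maxS τ⁻¹ (τ j) := by
        have h := le_maxS τ⁻¹ h1.le
        rwa [Equiv.Perm.inv_apply_self] at h
      exact hkl.le.trans (hl.trans (hN (τ j)))
    obtain ⟨hMM, hNN⟩ := raise_maxS hjk h2 hb1 hb2 hM hN
    exact hdef _ hMM hNN
  · intro hP
    have h4231 := prop14_no4231 hP
    have h42513 := prop14_no42513 hP
    have h35142 := prop14_no35142 hP
    have h351624 := prop14_no351624 hP
    suffices H : ∀ (N : ℕ) (τ : Equiv.Perm (Fin n)),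
        meas τ < N → (∀ x, maxS τ x ≤ maxS σ x) → (∀ x, maxS τ⁻¹ x ≤ maxS σ⁻¹ x) →
        bruhatLE τ σ by
      intro τ hM hN
      exact H (meas τ + 1) τ (Nat.lt_succ_self _) hM hN
    intro N
    induction N with
    | zero => intro τ h _ _; exact absurd h (Nat.not_lt_zero _)
    | succ N ih =>
      intro τ hm hM hN
      by_cases hτσ : τ = σ
      · subst hτσ; exact bruhatLE_refl τ
      · have hA : (Finset.univ.filter (fun x => τ x ≠ σ x)).Nonempty := by
          by_contra h
          rw [Finset.not_nonempty_iff_eq_empty] at h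
          apply hτσ
          apply Equiv.ext
          intro x
          by_contra hx
          have : x ∈ Finset.univ.filter (fun x => τ x ≠ σ x) := by simp [hx]
          rw [h] at this
          exact absurd this (Finset.notMem_empty x)
        set a := (Finset.univ.filter (fun x => τ x ≠ σ x)).min' hA with ha
        have hane : τ a ≠ σ a := by
          have h := Finset.min'_mem _ hA
          rw [← ha] at h
          simp only [Finset.mem_filter, Finset.mem_univ, true_and] at h
          exact h
        have hpre : ∀ x, x < a → τ x = σ x := by
          intro x hx
          by_contra hxne
          have h : a ≤ x := Finset.min'_le _ _ (by simp [hxne])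
          exact absurd hx (not_lt.2 h)
        have hlt := firstdiff_lt h4231 h42513 hM hN hpre hane
        obtain ⟨b, hab, hvb, hb1, hb2⟩ := exists_raise h35142 h351624 hM hN hpre hlt
        obtain ⟨hMM, hNN⟩ := raise_maxS hab hvb hb1 hb2 hM hN
        have hmeas : meas (τ * Equiv.swap a b) < N :=
          lt_of_lt_of_le (meas_swap_lt hab hvb) (Nat.lt_succ_iff.1 hm)
        exact bruhatLE_trans (bruhatLE_swap_up τ hab hvb) (ih _ hmeas hMM hNN)

end SmoothPerm
end
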